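/- Let X be an affine regulous variety (a Euclidean-closed constructible subset A of an affine real algebraic variety, with its sheaf of regulous functions) and let U ⊆ X be open in the constructible topology. Then the locally ringed space (U, R⁰_X|_U) is isomorphic to an affine regulous variety. Concretely, if f : V → ℝ is a regulous function with Z(f) = X \ U, then U is regulously isomorphic to the Euclidean-closed constructible subset {(x, y) ∈ X × ℝ : f(x)·y = 1} of V × ℝ via x ↦ (x, 1/f(x)). -/

import Mathlib

/-!
On each stratum of a stratification of `X` refining one for `f`, write `f = p / q`. There `f`
vanishes exactly where `p` does, so the strata minus `{p = 0}` stratify `U` and `1 / f = q / p`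
is regular on each of them. Over such a stratum the graph of `1 / f` is the Zariski locally closed
set `{q(x) y = p(x)}`, and these pieces stratify `Y = {(x, y) ∈ X × ℝ | f(x) y = 1}`, the graph of
`1 / f` over `U`: this gives both the constructibility of `Y` and the regulosity of the projection
`Y → U`. `Y` is closed since `X` is closed and `f` is continuous.
-/

open MvPolynomial Set

/-- Points of the ambient affine space `ℝ^m`. -/
abbrev Pt (m : ℕ) : Type := Fin m → ℝ

/-- A subset of `ℝ^m` is Zariski closed if it is the common zero set
of a family of real polynomials. -/
def ZarClosed {m : ℕ} (Z : Set (Pt m)) : Prop :=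
  ∃ S : Set (MvPolynomial (Fin m) ℝ), Z = {x | ∀ p ∈ S, eval x p = 0}

/-- Zariski locally closed subsets of `ℝ^m`. -/
def ZarLocClosed {m : ℕ} (L : Set (Pt m)) : Prop :=
  ∃ Z Z' : Set (Pt m), ZarClosed Z ∧ ZarClosed Z' ∧ L = Z \ Z'

/-- A set is constructible if it is a finite union of Zariski locally closed sets. -/
def Constructible {m : ℕ} (A : Set (Pt m)) : Prop :=
  ∃ (k : ℕ) (L : Fin k → Set (Pt m)), (∀ i, ZarLocClosed (L i)) ∧ A = ⋃ i, L i

/-- A set is irreducible (for the Zariski topology). -/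
def ZarIrreducible {m : ℕ} (S : Set (Pt m)) : Prop :=
  S.Nonempty ∧ ∀ Z Z' : Set (Pt m), ZarClosed Z → ZarClosed Z' → S ⊆ Z ∪ Z' →
    S ⊆ Z ∨ S ⊆ Z'

/-- A stratification of `A`: a finite family of pairwise disjoint Zariski locally
closed sets whose union is `A`. -/
def IsStratification {m : ℕ} (A : Set (Pt m)) {k : ℕ} (S : Fin k → Set (Pt m)) : Prop :=
  (∀ i, ZarLocClosed (S i)) ∧ (Pairwise fun i j => Disjoint (S i) (S j)) ∧ (⋃ i, S i) = A

/-- `f` is a regular function on `A ⊆ ℝ^m`: a quotient of polynomials whose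
denominator does not vanish on `A`. -/
def RegularFnOn {m : ℕ} (A : Set (Pt m)) (f : Pt m → ℝ) : Prop :=
  ∃ p q : MvPolynomial (Fin m) ℝ, ∀ x ∈ A, eval x q ≠ 0 ∧ f x * eval x q = eval x p

/-- A regular map `A → ℝ^k` (componentwise regular). -/
def RegularMapOn {m k : ℕ} (A : Set (Pt m)) (f : Pt m → Pt k) : Prop :=
  ∀ j, RegularFnOn A fun x => f x j

/-- A regulous function on `A`: Euclidean-continuous on `A` and regular on each
stratum of some stratification of `A`. -/
def RegulousFnOn {m : ℕ} (A : Set (Pt m)) (f : Pt m → ℝ) : Prop :=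
  ContinuousOn f A ∧
    ∃ (k : ℕ) (S : Fin k → Set (Pt m)), IsStratification A S ∧ ∀ i, RegularFnOn (S i) f

/-- A regulous map `A → ℝ^k`. -/
def RegulousMapOn {m k : ℕ} (A : Set (Pt m)) (f : Pt m → Pt k) : Prop :=
  ContinuousOn f A ∧
    ∃ (r : ℕ) (S : Fin r → Set (Pt m)), IsStratification A S ∧ ∀ i, RegularMapOn (S i) f

/-- `U` is an open subset of `X` in the constructible topology: the complement in `X`
of a Euclidean-closed constructible set. -/
def ConstructibleOpenIn {m : ℕ} (X U : Set (Pt m)) : Prop :=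
  U ⊆ X ∧ ∃ F : Set (Pt m), Constructible F ∧ IsClosed F ∧ U = X \ F


section Zariski

variable {m : ℕ}

lemma zarClosed_zeroSet (p : MvPolynomial (Fin m) ℝ) : ZarClosed {x : Pt m | eval x p = 0} :=
  ⟨{p}, by simp⟩

lemma ZarClosed.inter {Z Z' : Set (Pt m)} (h : ZarClosed Z) (h' : ZarClosed Z') :
    ZarClosed (Z ∩ Z') := by
  obtain ⟨S, rfl⟩ := h
  obtain ⟨S', rfl⟩ := h'
  exact ⟨S ∪ S', by ext x; simp [or_imp, forall_and]⟩

/-- The union is cut out by the pairwise products of the equations. -/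
lemma ZarClosed.union {Z Z' : Set (Pt m)} (h : ZarClosed Z) (h' : ZarClosed Z') :
    ZarClosed (Z ∪ Z') := by
  obtain ⟨S, rfl⟩ := h
  obtain ⟨S', rfl⟩ := h'
  refine ⟨image2 (· * ·) S S', Set.ext fun x => ⟨?_, fun h => ?_⟩⟩
  · rintro (h | h) _ ⟨p, hp, q, hq, rfl⟩ <;> simp [h _ ‹_›]
  · by_contra hx
    simp only [mem_union, mem_ofPred_eq, not_or, not_forall] at hx
    obtain ⟨⟨p, hp, hpx⟩, q, hq, hqx⟩ := hx
    exact mul_ne_zero hpx hqx (by simpa using h _ (mem_image2_of_mem hp hq))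

lemma ZarClosed.preimage_init {Z : Set (Pt m)} (h : ZarClosed Z) :
    ZarClosed {z : Pt (m + 1) | Fin.init z ∈ Z} := by
  obtain ⟨S, rfl⟩ := h
  exact ⟨rename Fin.castSucc '' S, by ext z; simp [eval_rename]; rfl⟩

lemma ZarClosed.zarLocClosed {Z : Set (Pt m)} (h : ZarClosed Z) : ZarLocClosed Z :=
  ⟨Z, ∅, h, ⟨{1}, by simp⟩, sdiff_empty.symm⟩

lemma ZarLocClosed.inter {L L' : Set (Pt m)} (h : ZarLocClosed L) (h' : ZarLocClosed L') :
    ZarLocClosed (L ∩ L') := by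
  obtain ⟨Z, W, hZ, hW, rfl⟩ := h
  obtain ⟨Z', W', hZ', hW', rfl⟩ := h'
  exact ⟨Z ∩ Z', W ∪ W', hZ.inter hZ', hW.union hW', by ext; simp; tauto⟩

lemma ZarLocClosed.inter_zarClosed {L Z : Set (Pt m)} (h : ZarLocClosed L) (hZ : ZarClosed Z) :
    ZarLocClosed (L ∩ Z) :=
  h.inter hZ.zarLocClosed

lemma ZarLocClosed.diff_zarClosed {L Z : Set (Pt m)} (h : ZarLocClosed L) (hZ : ZarClosed Z) :
    ZarLocClosed (L \ Z) := by
  obtain ⟨W, W', hW, hW', rfl⟩ := h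
  exact ⟨W, W' ∪ Z, hW, hW'.union hZ, sdiff_sdiff⟩

lemma ZarLocClosed.preimage_init {L : Set (Pt m)} (h : ZarLocClosed L) :
    ZarLocClosed {z : Pt (m + 1) | Fin.init z ∈ L} := by
  obtain ⟨Z, Z', hZ, hZ', rfl⟩ := h
  exact ⟨_, _, hZ.preimage_init, hZ'.preimage_init, rfl⟩

end Zariski

section Stratification

open Function

variable {m : ℕ}

lemma exists_isStratification_of_finite {ι : Type*} [Finite ι] {S : ι → Set (Pt m)}
    (hS : ∀ i, ZarLocClosed (S i)) (hd : Pairwise (Disjoint on S)) :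
    ∃ (k : ℕ) (T : Fin k → Set (Pt m)), IsStratification (⋃ i, S i) T ∧ ∀ j, ∃ i, T j = S i := by
  obtain ⟨k, ⟨e⟩⟩ := Finite.exists_equiv_fin ι
  exact ⟨k, S ∘ e.symm, ⟨fun j => hS _, hd.comp_of_injective e.symm.injective,
    e.symm.surjective.iUnion_comp S⟩, fun j => ⟨_, rfl⟩⟩

lemma IsStratification.subset {A : Set (Pt m)} {k : ℕ} {S : Fin k → Set (Pt m)}
    (hS : IsStratification A S) (i : Fin k) : S i ⊆ A :=
  hS.2.2 ▸ subset_iUnion S i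

lemma IsStratification.constructible {A : Set (Pt m)} {k : ℕ} {S : Fin k → Set (Pt m)}
    (hS : IsStratification A S) : Constructible A :=
  ⟨k, S, hS.1, hS.2.2.symm⟩

lemma ZarLocClosed.isStratification {L : Set (Pt m)} (h : ZarLocClosed L) :
    IsStratification L fun _ : Fin 1 => L :=
  ⟨fun _ => h, fun i j hij => absurd (Subsingleton.elim i j) hij, iUnion_const L⟩

lemma IsStratification.inter_zarClosed {A Z : Set (Pt m)} {k : ℕ} {S : Fin k → Set (Pt m)}
    (hS : IsStratification A S) (hZ : ZarClosed Z) :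
    IsStratification (A ∩ Z) fun i => S i ∩ Z :=
  ⟨fun i => (hS.1 i).inter_zarClosed hZ, fun _ _ hij => (hS.2.1 hij).mono inter_subset_left
    inter_subset_left, by rw [← iUnion_inter, hS.2.2]⟩

lemma IsStratification.diff_zarClosed {A Z : Set (Pt m)} {k : ℕ} {S : Fin k → Set (Pt m)}
    (hS : IsStratification A S) (hZ : ZarClosed Z) :
    IsStratification (A \ Z) fun i => S i \ Z :=
  ⟨fun i => (hS.1 i).diff_zarClosed hZ, fun _ _ hij => (hS.2.1 hij).mono sdiff_subset
    sdiff_subset, by rw [← iUnion_sdiff, hS.2.2]⟩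

lemma IsStratification.exists_union {A B : Set (Pt m)} {k r : ℕ}
    {S : Fin k → Set (Pt m)} {T : Fin r → Set (Pt m)}
    (hS : IsStratification A S) (hT : IsStratification B T) (hAB : Disjoint A B) :
    ∃ (n : ℕ) (W : Fin n → Set (Pt m)), IsStratification (A ∪ B) W := by
  have hd : Pairwise (Disjoint on Sum.elim S T) := by
    rintro (i | i) (j | j) hij
    · exact hS.2.1 (fun h => hij (congrArg _ h))
    · exact hAB.mono (hS.subset i) (hT.subset j)
    · exact hAB.symm.mono (hT.subset i) (hS.subset j)
    · exact hT.2.1 (fun h => hij (congrArg _ h))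
  obtain ⟨n, W, hW, -⟩ :=
    exists_isStratification_of_finite (Sum.forall.2 ⟨hS.1, hT.1⟩) hd
  rw [iUnion_sumElim, hS.2.2, hT.2.2] at hW
  exact ⟨n, W, hW⟩

/-- For `L = Z \ Z'`, the set `A ∪ L` is the disjoint union of `A \ Z`, `A ∩ (Z ∩ Z')` and `L`. -/
lemma IsStratification.exists_union_zarLocClosed {A L : Set (Pt m)} {k : ℕ}
    {S : Fin k → Set (Pt m)} (hS : IsStratification A S) (hL : ZarLocClosed L) :
    ∃ (n : ℕ) (W : Fin n → Set (Pt m)), IsStratification (A ∪ L) W := by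
  obtain ⟨Z, Z', hZ, hZ', hLZ⟩ := hL
  obtain ⟨r, T, hT⟩ := (hS.diff_zarClosed hZ).exists_union (hS.inter_zarClosed (hZ.inter hZ'))
    (disjoint_sdiff_left.mono_right (inter_subset_right.trans inter_subset_left))
  have hAL : A ∪ L = (A \ Z ∪ A ∩ (Z ∩ Z')) ∪ L := by
    ext x; simp only [hLZ, mem_union, mem_sdiff, mem_inter_iff]; tauto
  rw [hAL]
  refine hT.exists_union (hLZ ▸ ⟨Z, Z', hZ, hZ', rfl⟩ : ZarLocClosed L).isStratification ?_
  rw [hLZ, disjoint_union_left]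
  exact ⟨disjoint_sdiff_left.mono_right sdiff_subset,
    disjoint_sdiff_right.mono_left (inter_subset_right.trans inter_subset_right)⟩

lemma Constructible.exists_isStratification {A : Set (Pt m)} (h : Constructible A) :
    ∃ (k : ℕ) (S : Fin k → Set (Pt m)), IsStratification A S := by
  obtain ⟨k, L, hL, rfl⟩ := h
  induction k with
  | zero => exact ⟨0, L, hL, fun i => i.elim0, rfl⟩
  | succ k ih =>
    obtain ⟨n, S, hS⟩ := ih (fun i => L i.castSucc) (fun i => hL _)
    rw [iUnion_fin_add_one_eq_iUnion_castSucc]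
    exact hS.exists_union_zarLocClosed (hL _)

lemma IsStratification.exists_inter {A B : Set (Pt m)} {k r : ℕ}
    {S : Fin k → Set (Pt m)} {T : Fin r → Set (Pt m)}
    (hS : IsStratification A S) (hT : IsStratification B T) :
    ∃ (n : ℕ) (W : Fin n → Set (Pt m)), IsStratification (A ∩ B) W ∧
      ∀ j, ∃ a b, W j = S a ∩ T b := by
  have hd : Pairwise (Disjoint on fun p : Fin k × Fin r => S p.1 ∩ T p.2) := by
    rintro ⟨a, b⟩ ⟨a', b'⟩ hne
    by_cases ha : a = a'
    · exact (hT.2.1 fun hb => hne (Prod.ext ha hb)).mono inter_subset_right inter_subset_right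
    · exact (hS.2.1 ha).mono inter_subset_left inter_subset_left
  obtain ⟨n, W, hW, hWS⟩ :=
    exists_isStratification_of_finite (fun p : Fin k × Fin r => (hS.1 p.1).inter (hT.1 p.2)) hd
  rw [iUnion_prod', ← iUnion_inter_iUnion, hS.2.2, hT.2.2] at hW
  exact ⟨n, W, hW, fun j => by obtain ⟨⟨a, b⟩, h⟩ := hWS j; exact ⟨a, b, h⟩⟩

end Stratification

section Regulous

variable {m : ℕ}

lemma RegularFnOn.mono {A B : Set (Pt m)} {f : Pt m → ℝ} (hf : RegularFnOn A f) (hBA : B ⊆ A) :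
    RegularFnOn B f :=
  let ⟨p, q, h⟩ := hf
  ⟨p, q, fun x hx => h x (hBA hx)⟩

lemma regularFnOn_apply (A : Set (Pt m)) (i : Fin m) : RegularFnOn A fun x => x i :=
  ⟨X i, 1, by simp⟩

lemma regularMapOn_init (A : Set (Pt (m + 1))) : RegularMapOn A fun z => Fin.init z :=
  fun j => regularFnOn_apply A j.castSucc

lemma RegularFnOn.regularMapOn_snoc {A : Set (Pt m)} {g : Pt m → ℝ} (hg : RegularFnOn A g) :
    RegularMapOn A fun x => (Fin.snoc x (g x) : Pt (m + 1)) := by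
  intro j
  induction j using Fin.lastCases with
  | last => simpa using hg
  | cast i => simpa using regularFnOn_apply A i

lemma RegulousFnOn.regulousMapOn_snoc {A : Set (Pt m)} {g : Pt m → ℝ} (hg : RegulousFnOn A g) :
    RegulousMapOn A fun x => (Fin.snoc x (g x) : Pt (m + 1)) := by
  obtain ⟨hgc, k, S, hS, hSg⟩ := hg
  refine ⟨continuousOn_pi.2 fun j => ?_, k, S, hS, fun i => (hSg i).regularMapOn_snoc⟩
  induction j using Fin.lastCases with
  | last => simpa using hgc
  | cast i => simpa using (continuous_apply i).continuousOn

lemma RegulousFnOn.mono {A B : Set (Pt m)} {f : Pt m → ℝ} (hf : RegulousFnOn A f)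
    (hB : Constructible B) (hBA : B ⊆ A) : RegulousFnOn B f := by
  obtain ⟨hfc, k, S, hS, hSf⟩ := hf
  obtain ⟨r, T, hT⟩ := hB.exists_isStratification
  obtain ⟨n, W, hW, hWST⟩ := hS.exists_inter hT
  rw [inter_eq_right.2 hBA] at hW
  refine ⟨hfc.mono hBA, n, W, hW, fun j => ?_⟩
  obtain ⟨a, b, hj⟩ := hWST j
  exact (hSf a).mono (hj ▸ inter_subset_left)

/-- Where `f = p / q`, the nonvanishing of `f` is that of `p`, and there `f⁻¹ = q / p`. -/
lemma RegulousFnOn.inv {A : Set (Pt m)} {f : Pt m → ℝ} (hf : RegulousFnOn A f) :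
    RegulousFnOn {x ∈ A | f x ≠ 0} fun x => (f x)⁻¹ := by
  obtain ⟨hfc, k, S, hS, hSf⟩ := hf
  choose p q hpq using hSf
  have hf0 : ∀ i, ∀ x ∈ S i, f x ≠ 0 ↔ eval x (p i) ≠ 0 := fun i x hx => by
    rw [← (hpq i x hx).2, mul_ne_zero_iff_right (hpq i x hx).1]
  refine ⟨(hfc.mono (sep_subset _ _)).inv₀ fun x hx => hx.2, k,
    fun i => S i \ {x | eval x (p i) = 0},
    ⟨fun i => (hS.1 i).diff_zarClosed (zarClosed_zeroSet _),
      fun i j hij => (hS.2.1 hij).mono sdiff_subset sdiff_subset, ?_⟩, fun i => ⟨q i, p i, ?_⟩⟩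
  · ext x
    simp only [mem_iUnion, mem_sdiff, mem_ofPred_eq, ← hS.2.2]
    exact ⟨fun ⟨i, hx, hp⟩ => ⟨⟨i, hx⟩, (hf0 i x hx).2 hp⟩,
      fun ⟨⟨i, hx⟩, hfx⟩ => ⟨i, hx, (hf0 i x hx).1 hfx⟩⟩
  · rintro x ⟨hx, hp⟩
    refine ⟨hp, ?_⟩
    rw [← (hpq i x hx).2, ← mul_assoc, inv_mul_cancel₀ ((hf0 i x hx).2 hp), one_mul]

end Regulous

section Graph

variable {m : ℕ}

def snocGraph (A : Set (Pt m)) (g : Pt m → ℝ) : Set (Pt (m + 1)) :=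
  {z | Fin.init z ∈ A ∧ z (Fin.last m) = g (Fin.init z)}

lemma mem_snocGraph {A : Set (Pt m)} {g : Pt m → ℝ} {z : Pt (m + 1)} :
    z ∈ snocGraph A g ↔ Fin.init z ∈ A ∧ z (Fin.last m) = g (Fin.init z) :=
  Iff.rfl

lemma image_snoc_eq_snocGraph (A : Set (Pt m)) (g : Pt m → ℝ) :
    (fun x => (Fin.snoc x (g x) : Pt (m + 1))) '' A = snocGraph A g := by
  ext z
  constructor
  · rintro ⟨x, hx, rfl⟩
    simpa [mem_snocGraph] using hx
  · rintro ⟨hz, hzg⟩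
    exact ⟨Fin.init z, hz, by simp only [← hzg, Fin.snoc_init_self]⟩

/-- Over `L`, where `g = p / q`, the graph of `g` is cut out by `q(x) y = p(x)`. -/
lemma RegularFnOn.zarLocClosed_snocGraph {L : Set (Pt m)} {g : Pt m → ℝ}
    (hg : RegularFnOn L g) (hL : ZarLocClosed L) : ZarLocClosed (snocGraph L g) := by
  obtain ⟨p, q, hpq⟩ := hg
  have : snocGraph L g = {z : Pt (m + 1) | Fin.init z ∈ L} ∩
      {z | eval z (rename Fin.castSucc q * X (Fin.last m) - rename Fin.castSucc p) = 0} := by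
    ext z
    simp only [mem_snocGraph, mem_inter_iff, mem_ofPred_eq, map_sub, map_mul, eval_rename,
      eval_X, sub_eq_zero]
    refine and_congr_right fun hz => ?_
    rw [show z ∘ Fin.castSucc = Fin.init z from rfl, ← (hpq _ hz).2, mul_comm,
      mul_left_inj' (hpq _ hz).1]
  rw [this]
  exact hL.preimage_init.inter_zarClosed (zarClosed_zeroSet _)

lemma IsStratification.snocGraph {A : Set (Pt m)} {g : Pt m → ℝ} {k : ℕ}
    {S : Fin k → Set (Pt m)} (hS : IsStratification A S) (hg : ∀ i, RegularFnOn (S i) g) :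
    IsStratification (_root_.snocGraph A g) fun i => _root_.snocGraph (S i) g := by
  refine ⟨fun i => (hg i).zarLocClosed_snocGraph (hS.1 i), fun i j hij => ?_, ?_⟩
  · exact ((hS.2.1 hij).preimage Fin.init).mono (fun z hz => hz.1) (fun z hz => hz.1)
  · ext z
    simp only [mem_iUnion, mem_snocGraph, ← hS.2.2]
    exact ⟨fun ⟨i, hi, hz⟩ => ⟨⟨i, hi⟩, hz⟩, fun ⟨⟨i, hi⟩, hz⟩ => ⟨i, hi, hz⟩⟩

lemma setOf_mul_last_eq_one_eq_snocGraph (A : Set (Pt m)) (f : Pt m → ℝ) :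
    {z : Pt (m + 1) | Fin.init z ∈ A ∧ f (Fin.init z) * z (Fin.last m) = 1} =
      snocGraph {x ∈ A | f x ≠ 0} fun x => (f x)⁻¹ := by
  ext z
  simp only [mem_ofPred_eq, mem_snocGraph]
  constructor
  · rintro ⟨hz, h⟩
    exact ⟨⟨hz, left_ne_zero_of_mul_eq_one h⟩, eq_inv_of_mul_eq_one_right h⟩
  · rintro ⟨⟨hz, hf⟩, h⟩
    exact ⟨hz, h ▸ mul_inv_cancel₀ hf⟩

end Graph

/-- A constructible-open subset `U` of an affine regulous variety
`X` is itself (isomorphic to) an affine regulous variety: if `f` is a regulous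
function on the ambient space with zero set `X \ U` (inside `X`), then
`x ↦ (x, 1/f(x))` is a regulous isomorphism of `U` onto the Euclidean-closed
constructible set `Y = {(x,y) ∈ X × ℝ : f(x)·y = 1}`. -/
theorem stmt11 {m : ℕ} (X : Set (Pt m)) (hX : Constructible X) (hXcl : IsClosed X)
    (U : Set (Pt m)) (hU : ConstructibleOpenIn X U)
    (f : Pt m → ℝ) (hf : RegulousFnOn Set.univ f)
    (hZf : {x ∈ X | f x = 0} = X \ U) :
    Constructible {z : Pt (m + 1) | Fin.init z ∈ X ∧ f (Fin.init z) * z (Fin.last m) = 1} ∧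
    IsClosed {z : Pt (m + 1) | Fin.init z ∈ X ∧ f (Fin.init z) * z (Fin.last m) = 1} ∧
    RegulousMapOn U (fun x => (Fin.snoc x (f x)⁻¹ : Pt (m + 1))) ∧
    (fun x => (Fin.snoc x (f x)⁻¹ : Pt (m + 1))) '' U =
      {z : Pt (m + 1) | Fin.init z ∈ X ∧ f (Fin.init z) * z (Fin.last m) = 1} ∧
    RegulousMapOn {z : Pt (m + 1) | Fin.init z ∈ X ∧ f (Fin.init z) * z (Fin.last m) = 1}
      (fun z => Fin.init z) ∧
    (∀ x ∈ U, Fin.init (Fin.snoc x (f x)⁻¹ : Pt (m + 1)) = x) ∧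
    (∀ z ∈ {z : Pt (m + 1) | Fin.init z ∈ X ∧ f (Fin.init z) * z (Fin.last m) = 1},
      (Fin.snoc (Fin.init z) (f (Fin.init z))⁻¹ : Pt (m + 1)) = z) := by
  have hfc : Continuous f := continuousOn_univ.1 hf.1
  have hYcl : IsClosed {z : Pt (m + 1) | Fin.init z ∈ X ∧ f (Fin.init z) * z (Fin.last m) = 1} :=
    (hXcl.preimage continuous_id.finInit).inter
      (isClosed_eq ((hfc.comp continuous_id.finInit).mul (continuous_apply _)) continuous_const)
  have hUX : U = {x ∈ X | f x ≠ 0} := by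
    ext x
    have hZx := Set.ext_iff.1 hZf x
    have hxX := @hU.1 x
    simp only [mem_ofPred_eq, mem_sdiff] at hZx ⊢
    tauto
  subst hUX
  rw [setOf_mul_last_eq_one_eq_snocGraph] at hYcl ⊢
  have hinv := (hf.mono hX (subset_univ X)).inv
  obtain ⟨k, S, hS, hSinv⟩ := hinv.2
  refine ⟨(hS.snocGraph hSinv).constructible, hYcl, hinv.regulousMapOn_snoc,
    image_snoc_eq_snocGraph _ _, ⟨continuous_id.finInit.continuousOn, k, _, hS.snocGraph hSinv,
      fun i => regularMapOn_init _⟩, fun x _ => Fin.init_snoc _ _, fun z hz =>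
      (congrArg (Fin.snoc (Fin.init z)) hz.2).symm.trans (Fin.snoc_init_self z)⟩
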